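/- arXiv:0708.0104 — 2 statements merged into one kernel-verified Lean document; each statement's English description precedes it below -/
import Mathlib

section
/- For p > 1 there exist ζ ∈ (0,1) with p - 1 - ζ > 0 and a constant C > 0 such that for all complex numbers a, b: | |a+b|^{p-1}(a+b) - |a|^{p-1} a - |a|^{p-1} b - (p-1)|a|^{p-3} a Re(a b̄) | ≤ C ( |a|^{p-1-ζ} |b|^{1+ζ} + |b|^p ). -/
/-!
Write `F(z) = |z|^{p-1} z`, so that the quantity to estimate is the first-order Taylor remainder
`N_a(b)` of `F` at `a`. Since `F` is multiplicative, `N_a(a c) = F(a) N_1(c)` for `a ≠ 0`, and both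
sides of the estimate are homogeneous of degree `p` under `(a, b) ↦ (a, a c)`; this reduces the
claim to `|N_1(c)| ≤ C (|c|^{1+ζ} + |c|^p)`. As `F` is smooth near `1`, Taylor's theorem gives
`N_1(c) = O(|c|^2)` near `0`, which is `O(|c|^{1+ζ})` for `|c| ≤ 1`; away from `0` the crude bound
`|N_1(c)| ≤ (1 + |c|)^p + 1 + p|c|` suffices. The case `a = 0` is `|N_0(b)| = |b|^p`.
-/

open Filter Topology Asymptotics Metric ComplexConjugate

theorem ContDiffAt.isBigO_sub_sub_fderiv {E F : Type*} [NormedAddCommGroup E]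
    [NormedSpace ℝ E] [NormedAddCommGroup F] [NormedSpace ℝ F] {f : E → F} {x : E}
    (hf : ContDiffAt ℝ 2 f x) :
    (fun h => f (x + h) - f x - fderiv ℝ f x h) =O[𝓝 0] fun h => ‖h‖ ^ 2 := by
  obtain ⟨K, t, ht, hlip⟩ := (hf.fderiv_right (m := 1) (by norm_num)).exists_lipschitzOnWith
  have hdiff : ∀ᶠ y in 𝓝 x, DifferentiableAt ℝ f y :=
    (hf.eventually (by simp)).mono fun y hy => hy.differentiableAt (by simp)
  obtain ⟨ε, hε, hball⟩ := Metric.mem_nhds_iff.1 (inter_mem ht hdiff)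
  refine IsBigO.of_bound K (mem_of_superset (ball_mem_nhds 0 hε) fun h hh => ?_)
  rw [mem_ball_zero_iff] at hh
  have hsub : closedBall x ‖h‖ ⊆ ball x ε := closedBall_subset_ball hh
  have hlip_ball : ∀ z ∈ closedBall x ‖h‖, ‖fderiv ℝ f z - fderiv ℝ f x‖ ≤ K * ‖h‖ := by
    intro z hz
    rw [← dist_eq_norm]
    refine (hlip.dist_le_mul z (hball (hsub hz)).1 x (hball (mem_ball_self hε)).1).trans ?_
    gcongr
    exact hz
  have hmvt := (convex_closedBall x ‖h‖).norm_image_sub_le_of_norm_fderiv_le'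
    (fun z hz => (hball (hsub hz)).2) hlip_ball (mem_closedBall_self (norm_nonneg h))
    (y := x + h) (by simp [mem_closedBall, dist_eq_norm])
  simpa [norm_pow, norm_norm, sq, mul_assoc] using hmvt

noncomputable def powNonlin (p : ℝ) (z : ℂ) : ℂ := (‖z‖ ^ (p - 1) : ℝ) • z

noncomputable def powRemainder (p : ℝ) (a b : ℂ) : ℂ :=
  powNonlin p (a + b) - powNonlin p a - (‖a‖ ^ (p - 1) : ℝ) • b
    - ((p - 1) * ‖a‖ ^ (p - 3) * (a * conj b).re : ℝ) • a

theorem powNonlin_zero (p : ℝ) : powNonlin p 0 = 0 := smul_zero _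

theorem norm_powNonlin {p : ℝ} (hp : p ≠ 0) (z : ℂ) : ‖powNonlin p z‖ = ‖z‖ ^ p := by
  rw [powNonlin, norm_smul, Real.norm_of_nonneg (by positivity)]
  rcases eq_or_ne ‖z‖ 0 with hz | hz
  · rw [hz, mul_zero, Real.zero_rpow hp]
  · rw [← Real.rpow_add_one hz, sub_add_cancel]

theorem powNonlin_mul (p : ℝ) (a z : ℂ) :
    powNonlin p (a * z) = powNonlin p a * powNonlin p z := by
  simp only [powNonlin, norm_mul, Real.mul_rpow (norm_nonneg a) (norm_nonneg z),
    Complex.real_smul, Complex.ofReal_mul]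
  ring

theorem powRemainder_one_left (p : ℝ) (c : ℂ) :
    powRemainder p 1 c = powNonlin p (1 + c) - 1 - c - ((p - 1) * c.re : ℝ) := by
  simp [powRemainder, powNonlin]

theorem powRemainder_mul_right (p : ℝ) {a : ℂ} (ha : a ≠ 0) (c : ℂ) :
    powRemainder p a (a * c) = powNonlin p a * powRemainder p 1 c := by
  have hpow : ‖a‖ ^ (p - 3) * ‖a‖ ^ 2 = ‖a‖ ^ (p - 1) := by
    rw [← Real.rpow_natCast, ← Real.rpow_add (norm_pos_iff.2 ha)]
    ring_nf
  have hre : (a * conj (a * c)).re = ‖a‖ ^ 2 * c.re := by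
    rw [map_mul, ← mul_assoc, Complex.mul_conj, Complex.normSq_eq_norm_sq,
      Complex.re_ofReal_mul, Complex.conj_re]
  rw [powRemainder_one_left, powRemainder, ← mul_one_add, powNonlin_mul, hre]
  simp only [powNonlin, Complex.real_smul, ← hpow, Complex.ofReal_mul]
  ring

theorem norm_powRemainder_zero_left {p : ℝ} (hp : 1 < p) (b : ℂ) :
    ‖powRemainder p 0 b‖ = ‖b‖ ^ p := by
  simp [powRemainder, powNonlin_zero, Real.zero_rpow (sub_ne_zero.2 hp.ne'),
    norm_powNonlin (by linarith : p ≠ 0)]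

theorem fderiv_powNonlin_one_apply (p : ℝ) (c : ℂ) :
    fderiv ℝ (powNonlin p) 1 c = c + ((p - 1) * c.re : ℝ) := by
  have hsq : powNonlin p = (fun z : ℂ => (‖z‖ ^ 2) ^ ((p - 1) / 2)) • id := by
    ext1 z
    rw [Pi.smul_apply', id, powNonlin, ← Real.rpow_natCast, ← Real.rpow_mul (norm_nonneg z)]
    norm_num [mul_div_cancel₀]
  have h := ((hasStrictFDerivAt_norm_sq (1 : ℂ)).hasFDerivAt.rpow_const (p := (p - 1) / 2)
      (Or.inl (by simp))).smul (hasFDerivAt_id (1 : ℂ))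
  rw [hsq, h.fderiv]
  simp [← mul_assoc]

theorem contDiffAt_powNonlin (p : ℝ) {z : ℂ} (hz : z ≠ 0) (n : WithTop ℕ∞) :
    ContDiffAt ℝ n (powNonlin p) z :=
  ((contDiffAt_norm ℝ hz).rpow_const_of_ne (norm_ne_zero_iff.2 hz)).smul contDiffAt_id

theorem powRemainder_one_isBigO (p : ℝ) : powRemainder p 1 =O[𝓝 0] fun c => ‖c‖ ^ 2 := by
  have := (contDiffAt_powNonlin p one_ne_zero 2).isBigO_sub_sub_fderiv
  refine this.congr_left fun c => ?_
  rw [powRemainder_one_left, fderiv_powNonlin_one_apply]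
  simp only [powNonlin, norm_one, Real.one_rpow, one_smul, Complex.real_smul, Complex.ofReal_mul,
    Complex.ofReal_sub, Complex.ofReal_one]
  ring

theorem norm_powRemainder_one_le {p : ℝ} (hp : 1 ≤ p) (c : ℂ) :
    ‖powRemainder p 1 c‖ ≤ (1 + ‖c‖) ^ p + (1 + p * ‖c‖) := by
  have hF : ‖powNonlin p (1 + c)‖ ≤ (1 + ‖c‖) ^ p := by
    rw [norm_powNonlin (by linarith)]
    gcongr
    exact (norm_add_le _ _).trans_eq (by rw [norm_one])
  have hre : ‖(((p - 1) * c.re : ℝ) : ℂ)‖ ≤ (p - 1) * ‖c‖ := by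
    rw [Complex.norm_real, norm_mul, Real.norm_of_nonneg (by linarith)]
    gcongr
    exact Complex.abs_re_le_norm c
  rw [powRemainder_one_left]
  have h1 := norm_sub_le (powNonlin p (1 + c) - 1 - c) (((p - 1) * c.re : ℝ) : ℂ)
  have h2 := norm_sub_le (powNonlin p (1 + c) - 1) c
  have h3 := norm_sub_le (powNonlin p (1 + c)) 1
  rw [norm_one] at h3
  linarith

theorem one_add_rpow_add_le {p δ ζ t : ℝ} (hp : 0 ≤ p) (hδ : 0 < δ) (hζ : 0 ≤ ζ) (ht : δ ≤ t) :
    (1 + t) ^ p + (1 + p * t) ≤ ((1 + δ⁻¹) ^ p + (δ⁻¹ + p) * δ ^ (-ζ)) * (t ^ (1 + ζ) + t ^ p) := by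
  have ht0 : 0 < t := hδ.trans_le ht
  have hone : 1 ≤ δ⁻¹ * t := by rw [inv_mul_eq_div, one_le_div hδ]; exact ht
  have hpow : (1 + t) ^ p ≤ (1 + δ⁻¹) ^ p * t ^ p := by
    rw [← Real.mul_rpow (by positivity) ht0.le]
    gcongr
    linarith
  have hlin : t ≤ δ ^ (-ζ) * t ^ (1 + ζ) := by
    rw [Real.rpow_neg hδ.le, Real.rpow_one_add' ht0.le (by linarith), inv_mul_eq_div,
      le_div_iff₀ (by positivity)]
    gcongr
  have : 0 ≤ t ^ (1 + ζ) := by positivity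
  have : 0 ≤ (1 + δ⁻¹) ^ p * t ^ (1 + ζ) := by positivity
  have : 0 ≤ (δ⁻¹ + p) * δ ^ (-ζ) * t ^ p := by positivity
  nlinarith [mul_le_mul_of_nonneg_left hlin (by positivity : 0 ≤ δ⁻¹ + p)]

theorem exists_norm_powRemainder_one_le {p : ℝ} (hp : 1 ≤ p) {ζ : ℝ} (hζ0 : 0 ≤ ζ) (hζ1 : ζ ≤ 1) :
    ∃ C, ∀ c, ‖powRemainder p 1 c‖ ≤ C * (‖c‖ ^ (1 + ζ) + ‖c‖ ^ p) := by
  obtain ⟨K, hK, hO⟩ := (powRemainder_one_isBigO p).exists_pos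
  obtain ⟨ε, hε, hsmall⟩ := Metric.eventually_nhds_iff.1 hO.bound
  set δ := min ε 1
  have hδ : 0 < δ := lt_min hε one_pos
  refine ⟨K + (1 + δ⁻¹) ^ p + (δ⁻¹ + p) * δ ^ (-ζ), fun c => ?_⟩
  have hc1 : 0 ≤ ‖c‖ ^ (1 + ζ) := by positivity
  have hcp : 0 ≤ ‖c‖ ^ p := by positivity
  have hlarge : 0 ≤ ((1 + δ⁻¹) ^ p + (δ⁻¹ + p) * δ ^ (-ζ)) := by positivity
  rcases lt_or_ge ‖c‖ δ with hc | hc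
  · have hsq : ‖c‖ ^ 2 ≤ ‖c‖ ^ (1 + ζ) := by
      rw [← Real.rpow_natCast]
      exact Real.rpow_le_rpow_of_exponent_ge' (norm_nonneg c) (hc.le.trans (min_le_right _ _))
        (by linarith) (by norm_num; linarith)
    have := hsmall (by simpa using hc.trans_le (min_le_left _ _))
    rw [norm_pow, norm_norm] at this
    nlinarith
  · have := (norm_powRemainder_one_le hp c).trans
      (one_add_rpow_add_le (by linarith) hδ hζ0 hc)
    nlinarith

theorem exists_norm_powRemainder_le {p : ℝ} (hp : 1 < p) {ζ : ℝ} (hζ0 : 0 ≤ ζ) (hζ1 : ζ ≤ 1) :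
    ∃ C > 0, ∀ a b, ‖powRemainder p a b‖ ≤ C * (‖a‖ ^ (p - 1 - ζ) * ‖b‖ ^ (1 + ζ) + ‖b‖ ^ p) := by
  obtain ⟨C, hC⟩ := exists_norm_powRemainder_one_le hp.le hζ0 hζ1
  refine ⟨max C 1, by positivity, fun a b => ?_⟩
  rcases eq_or_ne a 0 with rfl | ha
  · rw [norm_powRemainder_zero_left hp]
    have : 0 ≤ ‖(0 : ℂ)‖ ^ (p - 1 - ζ) * ‖b‖ ^ (1 + ζ) := by positivity
    nlinarith [le_max_right C 1, Real.rpow_nonneg (norm_nonneg b) p]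
  obtain ⟨c, rfl⟩ : ∃ c, b = a * c := ⟨b / a, by field_simp⟩
  have ha0 : 0 < ‖a‖ := norm_pos_iff.2 ha
  have hscale : ‖a‖ ^ (p - 1 - ζ) * ‖a * c‖ ^ (1 + ζ) + ‖a * c‖ ^ p
      = ‖a‖ ^ p * (‖c‖ ^ (1 + ζ) + ‖c‖ ^ p) := by
    simp only [norm_mul, Real.mul_rpow (norm_nonneg a) (norm_nonneg c)]
    rw [← mul_assoc, ← Real.rpow_add ha0]
    ring_nf
  rw [powRemainder_mul_right p ha, norm_mul, norm_powNonlin (by linarith), hscale]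
  calc ‖a‖ ^ p * ‖powRemainder p 1 c‖ ≤ ‖a‖ ^ p * (C * (‖c‖ ^ (1 + ζ) + ‖c‖ ^ p)) := by
        gcongr; exact hC c
    _ ≤ ‖a‖ ^ p * (max C 1 * (‖c‖ ^ (1 + ζ) + ‖c‖ ^ p)) := by gcongr; exact le_max_left C 1
    _ = _ := by ring

/-- quadratic remainder estimate for the nonlinearity
`N(b) = |a+b|^{p-1}(a+b) - |a|^{p-1}a - |a|^{p-1}b - (p-1)|a|^{p-3} a Re(a b̄)`. -/
theorem stmt11 (p : ℝ) (hp : 1 < p) :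
    ∃ ζ ∈ Set.Ioo (0 : ℝ) 1, 0 < p - 1 - ζ ∧
      ∃ C > 0, ∀ a b : ℂ,
        ‖(‖a + b‖ ^ (p - 1) : ℝ) • (a + b) - (‖a‖ ^ (p - 1) : ℝ) • a
            - (‖a‖ ^ (p - 1) : ℝ) • b
            - (((p - 1) * ‖a‖ ^ (p - 3) * (a * (starRingEnd ℂ) b).re : ℝ) • a)‖
          ≤ C * (‖a‖ ^ (p - 1 - ζ) * ‖b‖ ^ (1 + ζ) + ‖b‖ ^ p) := by
  set ζ := min (1 / 2 : ℝ) ((p - 1) / 2)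
  have hζ0 : 0 < ζ := lt_min (by norm_num) (by linarith)
  have hζ1 : ζ ≤ 1 / 2 := min_le_left _ _
  have hζp : ζ ≤ (p - 1) / 2 := min_le_right _ _
  obtain ⟨C, hC, hbound⟩ := exists_norm_powRemainder_le hp hζ0.le (by linarith)
  exact ⟨ζ, ⟨hζ0, by linarith⟩, by linarith, C, hC, hbound⟩
end

section
/- Suppose a smooth branch of eigenvalues ν(ε) of a family of quadratic forms satisfies the differential inequality dν/dε ≥ (1/ε)(ν + c₀ - Cδ²) for all ε in an interval (0, ε₀], where c₀ > 0 and Cδ² < c₀/2. Then for any fixed small ρ > 0, on each interval where |ν(ε)| ≤ ρ < c₀/4, ν is strictly increasing with dν/dε ≥ c₀/(4ε); consequently the Lebesgue measure of {ε ∈ (ε₁, ε₂] : |ν(ε)| ≤ ρ} is at most (8ρ/c₀) ε₂ for any 0 < ε₁ < ε₂ ≤ ε₀. -/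
open MeasureTheory Topology Filter

/-- a branch of eigenvalues satisfying the Kato-type differential
inequality `dν/dε ≥ (1/ε)(ν + c₀ - Cδ²)` is strictly increasing with
`dν/dε ≥ c₀/(4ε)` wherever `|ν| ≤ ρ`, and consequently the set of resonant
values of `ε` has measure at most `(8ρ/c₀) ε₂` in each interval `(ε₁, ε₂]`. -/
theorem stmt18 (ε₀ c₀ C δ ρ : ℝ) (hε₀ : 0 < ε₀) (hc₀ : 0 < c₀) (hC : 0 < C)
    (hδ : 0 ≤ δ) (hρ : 0 < ρ)
    (hδ2 : C * δ ^ 2 < c₀ / 2) (hρ2 : ρ < c₀ / 4)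
    (ν ν' : ℝ → ℝ)
    (hder : ∀ ε ∈ Set.Ioc (0 : ℝ) ε₀, HasDerivAt ν (ν' ε) ε)
    (hineq : ∀ ε ∈ Set.Ioc (0 : ℝ) ε₀, (1 / ε) * (ν ε + c₀ - C * δ ^ 2) ≤ ν' ε) :
    (∀ ε ∈ Set.Ioc (0 : ℝ) ε₀, |ν ε| ≤ ρ → c₀ / (4 * ε) ≤ ν' ε)
    ∧ (∀ ε₁ ε₂ : ℝ, 0 < ε₁ → ε₁ < ε₂ → ε₂ ≤ ε₀ →
        volume {ε | ε ∈ Set.Ioc ε₁ ε₂ ∧ |ν ε| ≤ ρ}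
          ≤ ENNReal.ofReal (8 * ρ / c₀ * ε₂)) := by
  have key : ∀ ε ∈ Set.Ioc (0 : ℝ) ε₀, |ν ε| ≤ ρ → c₀ / (4 * ε) ≤ ν' ε := by
    intro ε hε habs
    obtain ⟨hl, hr⟩ := abs_le.mp habs
    have hε0 : 0 < ε := hε.1
    have h2 : c₀ / 4 ≤ ν ε + c₀ - C * δ ^ 2 := by linarith
    have h3 : (1 / ε) * (c₀ / 4) ≤ (1 / ε) * (ν ε + c₀ - C * δ ^ 2) :=
      mul_le_mul_of_nonneg_left h2 (by positivity)
    calc c₀ / (4 * ε) = (1 / ε) * (c₀ / 4) := by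
          ring
      _ ≤ (1 / ε) * (ν ε + c₀ - C * δ ^ 2) := h3
      _ ≤ ν' ε := hineq ε hε
  refine ⟨key, ?_⟩
  intro ε₁ ε₂ hε₁ h12 h2ε₀
  have hε₂0 : 0 < ε₂ := lt_trans hε₁ h12
  -- Barrier lemma 1 : once above ρ, stay above ρ
  have B1 : ∀ y z : ℝ, 0 < y → y ≤ z → z ≤ ε₀ → ρ < ν y → ρ < ν z := by
    intro y z hy hyz hz hνy
    by_contra hcon
    push_neg at hcon
    have hIcc : Set.Icc y z ⊆ Set.Ioc (0 : ℝ) ε₀ := fun s hs =>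
      ⟨lt_of_lt_of_le hy hs.1, hs.2.trans hz⟩
    set T := Set.Icc y z ∩ ν ⁻¹' Set.Iic ρ with hTdef
    have hTne : z ∈ T := ⟨⟨hyz, le_refl z⟩, hcon⟩
    have hTbdd : BddBelow T := ⟨y, fun s hs => hs.1.1⟩
    have hcontOn : ContinuousOn ν (Set.Icc y z) := fun s hs =>
      ((hder s (hIcc hs)).continuousAt).continuousWithinAt
    have hTclosed : IsClosed T :=
      hcontOn.preimage_isClosed_of_isClosed isClosed_Icc isClosed_Iic
    set t := sInf T with htdef
    have htT : t ∈ T := hTclosed.csInf_mem ⟨z, hTne⟩ hTbdd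
    have hyt : y < t := by
      rcases lt_or_eq_of_le htT.1.1 with h | h
      · exact h
      · exact absurd (h ▸ htT.2) (not_le.mpr hνy)
    have hleft : ∀ s ∈ Set.Ico y t, ρ < ν s := by
      intro s hs
      by_contra hh
      push_neg at hh
      have hsT : s ∈ T := ⟨⟨hs.1, hs.2.le.trans htT.1.2⟩, hh⟩
      exact absurd (csInf_le hTbdd hsT) (not_le.mpr hs.2)
    have ht_mem : t ∈ Set.Ioc (0 : ℝ) ε₀ := hIcc htT.1
    have hev : ∀ᶠ s in 𝓝[<] t, s ∈ Set.Ioo y t := by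
      have h1 : Set.Ioi y ∈ 𝓝[<] t := nhdsWithin_le_nhds (Ioi_mem_nhds hyt)
      filter_upwards [h1, self_mem_nhdsWithin] with s hs1 hs2
      exact ⟨hs1, hs2⟩
    have hνt_ge : ρ ≤ ν t := by
      have hc : Filter.Tendsto ν (𝓝[<] t) (𝓝 (ν t)) :=
        ((hder t ht_mem).continuousAt.continuousWithinAt).tendsto
      refine ge_of_tendsto hc ?_
      filter_upwards [hev] with s hs
      exact (hleft s ⟨hs.1.le, hs.2⟩).le
    have hd : c₀ / (4 * t) ≤ ν' t :=
      key t ht_mem (abs_le.mpr ⟨by linarith, htT.2⟩)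
    have hpos : 0 < c₀ / (4 * t) := by
      have := ht_mem.1; positivity
    have hslope : Filter.Tendsto (slope ν t) (𝓝[<] t) (𝓝 (ν' t)) := by
      have h1 := hasDerivAt_iff_tendsto_slope.mp (hder t ht_mem)
      exact h1.mono_left (nhdsWithin_mono t (fun s hs => ne_of_lt hs))
    have hnonpos : ν' t ≤ 0 := by
      have hh2 : ν t ≤ ρ := htT.2
      refine le_of_tendsto hslope ?_
      filter_upwards [hev] with s hs
      rw [slope_def_field]
      apply div_nonpos_of_nonneg_of_nonpos
      · have := hleft s ⟨hs.1.le, hs.2⟩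
        linarith
      · linarith [hs.2]
    linarith
  -- Barrier lemma 2 : if below -ρ at y, was below -ρ at all earlier x
  have B2 : ∀ x y : ℝ, 0 < x → x ≤ y → y ≤ ε₀ → ν y < -ρ → ν x < -ρ := by
    intro x y hx hxy hy hνy
    by_contra hcon
    push_neg at hcon
    have hIcc : Set.Icc x y ⊆ Set.Ioc (0 : ℝ) ε₀ := fun s hs =>
      ⟨lt_of_lt_of_le hx hs.1, hs.2.trans hy⟩
    set T := Set.Icc x y ∩ ν ⁻¹' Set.Ici (-ρ) with hTdef
    have hTne : x ∈ T := ⟨⟨le_refl x, hxy⟩, hcon⟩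
    have hTbdd : BddAbove T := ⟨y, fun s hs => hs.1.2⟩
    have hcontOn : ContinuousOn ν (Set.Icc x y) := fun s hs =>
      ((hder s (hIcc hs)).continuousAt).continuousWithinAt
    have hTclosed : IsClosed T :=
      hcontOn.preimage_isClosed_of_isClosed isClosed_Icc isClosed_Ici
    set t := sSup T with htdef
    have htT : t ∈ T := hTclosed.csSup_mem ⟨x, hTne⟩ hTbdd
    have hty : t < y := by
      rcases lt_or_eq_of_le htT.1.2 with h | h
      · exact h
      · exact absurd (h ▸ htT.2) (not_le.mpr hνy)
    have hright : ∀ s ∈ Set.Ioc t y, ν s < -ρ := by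
      intro s hs
      by_contra hh
      push_neg at hh
      have hsT : s ∈ T := ⟨⟨htT.1.1.trans hs.1.le, hs.2⟩, hh⟩
      exact absurd (le_csSup hTbdd hsT) (not_le.mpr hs.1)
    have ht_mem : t ∈ Set.Ioc (0 : ℝ) ε₀ := hIcc htT.1
    have hev : ∀ᶠ s in 𝓝[>] t, s ∈ Set.Ioo t y := by
      have h1 : Set.Iio y ∈ 𝓝[>] t := nhdsWithin_le_nhds (Iio_mem_nhds hty)
      filter_upwards [h1, self_mem_nhdsWithin] with s hs1 hs2
      exact ⟨hs2, hs1⟩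
    have hνt_le : ν t ≤ -ρ := by
      have hc : Filter.Tendsto ν (𝓝[>] t) (𝓝 (ν t)) :=
        ((hder t ht_mem).continuousAt.continuousWithinAt).tendsto
      refine le_of_tendsto hc ?_
      filter_upwards [hev] with s hs
      exact (hright s ⟨hs.1, hs.2.le⟩).le
    have hd : c₀ / (4 * t) ≤ ν' t :=
      key t ht_mem (abs_le.mpr ⟨htT.2, by linarith⟩)
    have hpos : 0 < c₀ / (4 * t) := by
      have := ht_mem.1; positivity
    have hslope : Filter.Tendsto (slope ν t) (𝓝[>] t) (𝓝 (ν' t)) := by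
      have h1 := hasDerivAt_iff_tendsto_slope.mp (hder t ht_mem)
      exact h1.mono_left (nhdsWithin_mono t (fun s hs => ne_of_gt hs))
    have hnonpos : ν' t ≤ 0 := by
      have hh2 : -ρ ≤ ν t := htT.2
      refine le_of_tendsto hslope ?_
      filter_upwards [hev] with s hs
      rw [slope_def_field]
      apply div_nonpos_of_nonpos_of_nonneg
      · have := hright s ⟨hs.1, hs.2.le⟩
        linarith
      · linarith [hs.1]
    linarith
  set S := {ε | ε ∈ Set.Ioc ε₁ ε₂ ∧ |ν ε| ≤ ρ} with hSdef
  -- S is order-convex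
  have hOC : ∀ p ∈ S, ∀ q ∈ S, Set.Icc p q ⊆ S := by
    intro p hp q hq s hs
    have hs0 : 0 < s := lt_trans hε₁ (lt_of_lt_of_le hp.1.1 hs.1)
    have hsε₀ : s ≤ ε₀ := (hs.2.trans hq.1.2).trans h2ε₀
    refine ⟨⟨lt_of_lt_of_le hp.1.1 hs.1, hs.2.trans hq.1.2⟩, ?_⟩
    rw [abs_le]
    constructor
    · by_contra h
      push_neg at h
      have := B2 p s (lt_trans hε₁ hp.1.1) hs.1 hsε₀ h
      have hp2 := (abs_le.mp hp.2).1
      linarith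
    · by_contra h
      push_neg at h
      have := B1 s q hs0 hs.2 (hq.1.2.trans h2ε₀) h
      have hq2 := (abs_le.mp hq.2).2
      linarith
  -- growth estimate on S
  have hM : ∀ p ∈ S, ∀ q ∈ S, p ≤ q → q - p ≤ 8 * ρ / c₀ * ε₂ := by
    intro p hp q hq hpq
    have hIccS : Set.Icc p q ⊆ S := hOC p hp q hq
    have hIccIo : Set.Icc p q ⊆ Set.Ioc (0 : ℝ) ε₀ := fun s hs =>
      ⟨lt_trans hε₁ (hIccS hs).1.1, (hIccS hs).1.2.trans h2ε₀⟩
    have hK : ∀ s ∈ Set.Icc p q, c₀ / (4 * ε₂) ≤ ν' s := by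
      intro s hs
      have h1 := key s (hIccIo hs) (hIccS hs).2
      have hs0 : 0 < s := (hIccIo hs).1
      have hsε₂ : s ≤ ε₂ := (hIccS hs).1.2
      have h2 : c₀ / (4 * ε₂) ≤ c₀ / (4 * s) := by
        apply div_le_div_of_nonneg_left hc₀.le (by positivity)
        linarith
      linarith
    have hconv : Convex ℝ (Set.Icc p q) := convex_Icc p q
    have hcont : ContinuousOn ν (Set.Icc p q) := fun s hs =>
      ((hder s (hIccIo hs)).continuousAt).continuousWithinAt
    have hdiff : DifferentiableOn ℝ ν (interior (Set.Icc p q)) := fun s hs =>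
      ((hder s (hIccIo (interior_subset hs))).differentiableAt).differentiableWithinAt
    have hge : ∀ s ∈ interior (Set.Icc p q), c₀ / (4 * ε₂) ≤ deriv ν s := by
      intro s hs
      rw [(hder s (hIccIo (interior_subset hs))).deriv]
      exact hK s (interior_subset hs)
    have hgrow := hconv.mul_sub_le_image_sub_of_le_deriv hcont hdiff hge
      p ⟨le_rfl, hpq⟩ q ⟨hpq, le_rfl⟩ hpq
    have hν : ν q - ν p ≤ 2 * ρ := by
      have h1 := (abs_le.mp hp.2).1
      have h2 := (abs_le.mp hq.2).2
      linarith
    have h1 : c₀ / (4 * ε₂) * (q - p) ≤ 2 * ρ := le_trans hgrow hν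
    rw [div_mul_eq_mul_div, div_le_iff₀ (by positivity)] at h1
    calc q - p ≤ 8 * ρ * ε₂ / c₀ := by
          rw [le_div_iff₀ hc₀]; nlinarith
      _ = 8 * ρ / c₀ * ε₂ := by ring
  rcases Set.eq_empty_or_nonempty S with hS | ⟨s₀, hs₀⟩
  · rw [hS]
    simp
  · have hbddA : BddBelow S := ⟨ε₁, fun s hs => hs.1.1.le⟩
    have hbddB : BddAbove S := ⟨ε₂, fun s hs => hs.1.2⟩
    set a := sInf S with hadef
    set b := sSup S with hbdef
    have hsubIcc : S ⊆ Set.Icc a b := fun s hs => ⟨csInf_le hbddA hs, le_csSup hbddB hs⟩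
    have hba : b - a ≤ 8 * ρ / c₀ * ε₂ := by
      have hb : b ≤ a + 8 * ρ / c₀ * ε₂ := by
        apply csSup_le ⟨s₀, hs₀⟩
        intro q hq
        have hqa : q - 8 * ρ / c₀ * ε₂ ≤ a := by
          apply le_csInf ⟨s₀, hs₀⟩
          intro p hp
          rcases le_total p q with h | h
          · linarith [hM p hp q hq h]
          · have hnn : (0:ℝ) ≤ 8 * ρ / c₀ * ε₂ := by positivity
            linarith
        linarith
      linarith
    calc volume {ε | ε ∈ Set.Ioc ε₁ ε₂ ∧ |ν ε| ≤ ρ} = volume S := rfl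
      _ ≤ volume (Set.Icc a b) := measure_mono hsubIcc
      _ = ENNReal.ofReal (b - a) := Real.volume_Icc
      _ ≤ ENNReal.ofReal (8 * ρ / c₀ * ε₂) := ENNReal.ofReal_le_ofReal hba
end
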